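/- arXiv:1609.08999 — 2 statements merged into one kernel-verified Lean document; each statement's English description precedes it below -/
import Mathlib

section
/- (Remark 1.2) Let f : ℝ → ℝ be continuous with F(t) = ∫₀^t f(τ) dτ, and assume (f4): the map t ↦ f(t)/|t| is strictly increasing on ℝ∖{0}. Then the function G(t) = ½ f(t)t − F(t) is strictly increasing for t > 0 (i.e. strictly increasing on (0,∞)) and strictly decreasing for t < 0 (i.e. strictly decreasing on (−∞,0)). -/
open MeasureTheory Filter

noncomputable section

namespace ZeroMass

/-- The ambient Euclidean space `ℝ^N`. -/
abbrev EN (N : ℕ) := EuclideanSpace ℝ (Fin N)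

/-- The critical fractional Sobolev exponent `2*_α = 2N/(N-2α)`. -/
def critExp (N : ℕ) (α : ℝ) : ℝ := 2 * N / (N - 2 * α)

/-- The square of the Gagliardo seminorm `[u]²`. -/
def gagSq (N : ℕ) (α : ℝ) (u : EN N → ℝ) : ENNReal :=
  ∫⁻ p : EN N × EN N, ENNReal.ofReal ((u p.1 - u p.2) ^ 2 / ‖p.1 - p.2‖ ^ ((N : ℝ) + 2 * α))

/-- The square of the full norm `‖u‖² = [u]² + ∫ V u²`. -/
def normSq {N : ℕ} (α : ℝ) (V : EN N → ℝ) (u : EN N → ℝ) : ENNReal :=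
  gagSq N α u + ∫⁻ x, ENNReal.ofReal (V x * u x ^ 2)

/-- Membership in the space `X`. -/
def memX {N : ℕ} (α : ℝ) (V : EN N → ℝ) (u : EN N → ℝ) : Prop :=
  Measurable u ∧ normSq α V u < ⊤

/-- The norm of `X`, i.e. `‖u‖ = ([u]² + ∫ V u²)^{1/2}`. -/
def Xnorm {N : ℕ} (α : ℝ) (V : EN N → ℝ) (u : EN N → ℝ) : ℝ :=
  ((normSq α V u).toReal) ^ (1 / 2 : ℝ)

/-- The primitive `F(t) = ∫₀ᵗ f(τ) dτ`. -/
def prim (f : ℝ → ℝ) (t : ℝ) : ℝ := ∫ τ in (0 : ℝ)..t, f τ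

/-- The energy functional `J`. -/
def Jfun {N : ℕ} (α : ℝ) (V K : EN N → ℝ) (f : ℝ → ℝ) (u : EN N → ℝ) : ℝ :=
  (1 / 2) * (normSq α V u).toReal - ∫ x, K x * prim f (u x)

/-- The pairing `⟨J'(u), φ⟩`. -/
def Jd {N : ℕ} (α : ℝ) (V K : EN N → ℝ) (f : ℝ → ℝ) (u φ : EN N → ℝ) : ℝ :=
  (∫ p : EN N × EN N, (u p.1 - u p.2) * (φ p.1 - φ p.2) / ‖p.1 - p.2‖ ^ ((N : ℝ) + 2 * α))
    + (∫ x, V x * u x * φ x) - ∫ x, K x * f (u x) * φ x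

/-- Positive part `u⁺ = max(u, 0)`. -/
def uplus {N : ℕ} (u : EN N → ℝ) : EN N → ℝ := fun x => max (u x) 0

/-- Negative part `u⁻ = min(u, 0)`. -/
def uminus {N : ℕ} (u : EN N → ℝ) : EN N → ℝ := fun x => min (u x) 0

/-- `u` is not almost everywhere zero. -/
def NotAEZero {N : ℕ} (u : EN N → ℝ) : Prop :=
  ¬ (u =ᵐ[(volume : Measure (EN N))] (0 : EN N → ℝ))

/-- Hypothesis (h1): `V, K > 0` everywhere and `K` bounded. -/
def H1 {N : ℕ} (V K : EN N → ℝ) : Prop :=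
  (∀ x, 0 < V x) ∧ (∀ x, 0 < K x) ∧ ∃ C : ℝ, ∀ x, K x ≤ C

/-- Hypothesis (h2): uniform vanishing of `∫_{A_n ∩ {|x| ≥ r}} K`. -/
def H2 {N : ℕ} (K : EN N → ℝ) : Prop :=
  ∀ (A : ℕ → Set (EN N)) (R : ℝ), 0 < R → (∀ n, MeasurableSet (A n)) →
    (∀ n, volume (A n) ≤ ENNReal.ofReal R) →
    ∀ ε : ℝ, 0 < ε → ∃ r₀ : ℝ, ∀ r : ℝ, r₀ ≤ r → ∀ n,
      (∫⁻ x in A n ∩ {x : EN N | r ≤ ‖x‖}, ENNReal.ofReal (K x)) ≤ ENNReal.ofReal ε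

/-- Hypothesis (h3): `K/V` is bounded. -/
def H3 {N : ℕ} (V K : EN N → ℝ) : Prop := ∃ C : ℝ, ∀ x, K x / V x ≤ C

/-- Hypothesis (h4) with exponent `m`. -/
def H4 {N : ℕ} (α : ℝ) (V K : EN N → ℝ) (m : ℝ) : Prop :=
  2 < m ∧ m < critExp N α ∧
    Tendsto (fun x : EN N => K x / V x ^ ((critExp N α - m) / (critExp N α - 2)))
      (comap (fun x : EN N => ‖x‖) atTop) (nhds 0)

/-- Hypothesis (f1): `f(t)/|t| → 0` as `t → 0`. -/
def Cf1 (f : ℝ → ℝ) : Prop :=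
  Tendsto (fun t : ℝ => f t / |t|) (nhdsWithin 0 {(0 : ℝ)}ᶜ) (nhds 0)

/-- Hypothesis (f̃1): `limsup_{t→0} f(t)/|t|^{m-1} < ∞`. -/
def Cf1' (f : ℝ → ℝ) (m : ℝ) : Prop :=
  ∃ C : ℝ, ∀ᶠ t in nhdsWithin (0 : ℝ) {(0 : ℝ)}ᶜ, f t / |t| ^ (m - 1) ≤ C

/-- Hypothesis (f2) with exponent `p`: `f(t)/|t|^{p-1} → 0` as `|t| → ∞`. -/
def Cf2 (f : ℝ → ℝ) (p : ℝ) : Prop :=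
  Tendsto (fun t : ℝ => f t / |t| ^ (p - 1)) (comap (fun t : ℝ => |t|) atTop) (nhds 0)

/-- Hypothesis (f3): `F(t)/t² → +∞` as `|t| → ∞`. -/
def Cf3 (f : ℝ → ℝ) : Prop :=
  Tendsto (fun t : ℝ => prim f t / t ^ 2) (comap (fun t : ℝ => |t|) atTop) atTop

/-- Hypothesis (f4): `t ↦ f(t)/|t|` is strictly increasing on `ℝ \ {0}`. -/
def Cf4 (f : ℝ → ℝ) : Prop :=
  ∀ s t : ℝ, s ≠ 0 → t ≠ 0 → s < t → f s / |s| < f t / |t|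

/-- Nehari manifold membership, formulated with the pairing `⟨J'(u), u⟩ = 0`. -/
def memNehari {N : ℕ} (α : ℝ) (V K : EN N → ℝ) (f : ℝ → ℝ) (u : EN N → ℝ) : Prop :=
  memX α V u ∧ NotAEZero u ∧ Jd α V K f u u = 0

/-- Nehari manifold membership, formulated as `‖u‖² = ∫ K f(u) u`. -/
def memNehari2 {N : ℕ} (α : ℝ) (V K : EN N → ℝ) (f : ℝ → ℝ) (u : EN N → ℝ) : Prop :=
  memX α V u ∧ NotAEZero u ∧ (normSq α V u).toReal = ∫ x, K x * f (u x) * u x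

/-- Nodal (sign-changing) Nehari set membership. -/
def memM {N : ℕ} (α : ℝ) (V K : EN N → ℝ) (f : ℝ → ℝ) (u : EN N → ℝ) : Prop :=
  memNehari α V K f u ∧ NotAEZero (uplus u) ∧ NotAEZero (uminus u) ∧
    Jd α V K f u (uplus u) = 0 ∧ Jd α V K f u (uminus u) = 0

/-- Weak convergence in `X` of the sequence `u` to `w`. -/
def weakConv {N : ℕ} (α : ℝ) (V : EN N → ℝ) (u : ℕ → EN N → ℝ) (w : EN N → ℝ) : Prop :=
  ∀ v : EN N → ℝ, memX α V v →
    Tendsto (fun n =>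
      (∫ p : EN N × EN N,
        ((u n p.1 - w p.1) - (u n p.2 - w p.2)) * (v p.1 - v p.2)
          / ‖p.1 - p.2‖ ^ ((N : ℝ) + 2 * α))
      + ∫ x, V x * (u n x - w x) * v x) atTop (nhds 0)

/-- The function `G(t) = ½ f(t) t − F(t)` of Remark 1.2. -/
def halfMulSubPrim (f : ℝ → ℝ) (t : ℝ) : ℝ := 1 / 2 * f t * t - prim f t

theorem prim_neg_comp (f : ℝ → ℝ) (t : ℝ) : prim (fun τ => -f (-τ)) t = prim f (-t) := by
  simp only [prim, intervalIntegral.integral_neg, intervalIntegral.integral_comp_neg, neg_zero,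
    intervalIntegral.integral_symm (-t) 0]

theorem halfMulSubPrim_neg_comp (f : ℝ → ℝ) (t : ℝ) :
    halfMulSubPrim (fun τ => -f (-τ)) t = halfMulSubPrim f (-t) := by
  simp only [halfMulSubPrim, prim_neg_comp]
  ring

theorem Cf4.neg_comp {f : ℝ → ℝ} (hf4 : Cf4 f) : Cf4 (fun τ => -f (-τ)) := by
  intro s t hs ht hst
  have := hf4 (-t) (-s) (neg_ne_zero.2 ht) (neg_ne_zero.2 hs) (neg_lt_neg hst)
  simp only [abs_neg, neg_div] at this ⊢
  exact neg_lt_neg this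

theorem Cf4.strictMonoOn_div {f : ℝ → ℝ} (hf4 : Cf4 f) :
    StrictMonoOn (fun t => f t / t) (Set.Ioi 0) := by
  intro s (hs : 0 < s) t (ht : 0 < t) hst
  simpa only [abs_of_pos hs, abs_of_pos ht] using hf4 s t hs.ne' ht.ne' hst

theorem integral_le_of_div_le {f : ℝ → ℝ} {s t c : ℝ} (hf : IntervalIntegrable f volume s t)
    (hs : 0 < s) (hst : s ≤ t) (hc : ∀ τ ∈ Set.Icc s t, f τ / τ ≤ c) :
    ∫ τ in s..t, f τ ≤ c * ((t ^ 2 - s ^ 2) / 2) := by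
  have hle : ∀ τ ∈ Set.Icc s t, f τ ≤ c * τ := fun τ hτ =>
    (div_le_iff₀ (hs.trans_le hτ.1)).1 (hc τ hτ)
  calc ∫ τ in s..t, f τ ≤ ∫ τ in s..t, c * τ :=
        intervalIntegral.integral_mono_on hst hf
          ((continuous_const_mul c).intervalIntegrable s t) hle
    _ = c * ((t ^ 2 - s ^ 2) / 2) := by rw [intervalIntegral.integral_const_mul, integral_id]

theorem strictMonoOn_halfMulSubPrim {f : ℝ → ℝ} (hf : Continuous f)
    (hmono : StrictMonoOn (fun t => f t / t) (Set.Ioi 0)) :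
    StrictMonoOn (halfMulSubPrim f) (Set.Ioi 0) := by
  intro s (hs : 0 < s) t (ht : 0 < t) hst
  have hsplit : prim f t = prim f s + ∫ τ in s..t, f τ :=
    (intervalIntegral.integral_add_adjacent_intervals (hf.intervalIntegrable 0 s)
      (hf.intervalIntegrable s t)).symm
  -- On `[s, t]` the graph of `f` lies below the ray through `(t, f t)`; this leaves
  -- `G t - G s ≥ s² / 2 * (f t / t - f s / s)`.
  have hbound : ∫ τ in s..t, f τ ≤ f t / t * ((t ^ 2 - s ^ 2) / 2) :=
    integral_le_of_div_le (hf.intervalIntegrable s t) hs hst.le fun τ hτ =>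
      hmono.monotoneOn (hs.trans_le hτ.1) ht hτ.2
  have hgain : 0 < s ^ 2 * (f t / t - f s / s) :=
    mul_pos (pow_pos hs 2) (sub_pos.2 (hmono hs ht hst))
  have hft : f t * t = f t / t * t ^ 2 := by field_simp
  have hfs : f s * s = f s / s * s ^ 2 := by field_simp
  simp only [halfMulSubPrim, hsplit]
  linarith

end ZeroMass

open ZeroMass
/-- Remark 1.2: under (f4), `t ↦ ½ f(t)t − F(t)` is strictly increasing on `(0,∞)`
and strictly decreasing on `(−∞,0)`. -/
theorem statement7 (f : ℝ → ℝ) (hf : Continuous f) (hf4 : Cf4 f) :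
    StrictMonoOn (fun t : ℝ => (1 / 2) * f t * t - prim f t) (Set.Ioi (0 : ℝ)) ∧
    StrictAntiOn (fun t : ℝ => (1 / 2) * f t * t - prim f t) (Set.Iio (0 : ℝ)) := by
  refine ⟨strictMonoOn_halfMulSubPrim hf hf4.strictMonoOn_div, ?_⟩
  -- `t ↦ -f (-t)` again satisfies (f4), and its `G` is `G ∘ neg`.
  have hreflect := strictMonoOn_halfMulSubPrim (f := fun τ => -f (-τ)) (by fun_prop)
    hf4.neg_comp.strictMonoOn_div
  intro s (hs : s < 0) t (ht : t < 0) hst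
  have := hreflect (neg_pos.2 ht) (neg_pos.2 hs) (neg_lt_neg hst)
  rwa [halfMulSubPrim_neg_comp, halfMulSubPrim_neg_comp, neg_neg, neg_neg] at this
end
end

section
/- (Estimate (3.3)) Assume (h1) and (h4) with exponent m ∈ (2, 2*_α). Then there exists C_m > 0 such that for each ε ∈ (0, C_m) there is R > 0 with ∫_{|x| ≥ R} K(x)|u(x)|^m dx ≤ ε ∫_{|x| ≥ R} ( V(x)|u(x)|² + |u(x)|^{2*_α} ) dx for every measurable function u : ℝ^N → ℝ. -/
open MeasureTheory Filter

noncomputable section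

open ZeroMass
/-- Estimate (3.3): under (h1) and (h4), for small `ε` there is `R > 0` such that
`∫_{|x| ≥ R} K|u|^m ≤ ε ∫_{|x| ≥ R} (V u² + |u|^{2*_α})` for every measurable `u`. -/
theorem statement9 {N : ℕ} (α : ℝ) (hα : α ∈ Set.Ioo (0 : ℝ) 1) (hN : 2 * α < N)
    (V K : EN N → ℝ) (hV : Continuous V) (hK : Continuous K)
    (h1 : H1 V K) (m : ℝ) (h4 : H4 α V K m) :
    ∃ Cm : ℝ, 0 < Cm ∧ ∀ ε : ℝ, 0 < ε → ε < Cm → ∃ R : ℝ, 0 < R ∧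
      ∀ u : EN N → ℝ, Measurable u →
        (∫⁻ x in {x : EN N | R ≤ ‖x‖}, ENNReal.ofReal (K x * |u x| ^ m)) ≤
          ENNReal.ofReal ε *
            ∫⁻ x in {x : EN N | R ≤ ‖x‖},
              ENNReal.ofReal (V x * u x ^ 2 + |u x| ^ critExp N α) := by
  obtain ⟨hα0, hα1⟩ := hα
  obtain ⟨hm2, hmc, htend⟩ := h4
  set c := critExp N α with hc
  have hden : (0:ℝ) < (N:ℝ) - 2 * α := by linarith
  have hc2 : 2 < c := by
    rw [hc]; unfold critExp
    rw [lt_div_iff₀ hden]; nlinarith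
  set lam := (c - m) / (c - 2) with hlam
  have hlam0 : 0 < lam := div_pos (by linarith) (by linarith)
  have hlam1 : lam < 1 := by
    rw [hlam, div_lt_one (by linarith)]; linarith
  refine ⟨1, one_pos, fun ε hε _ => ?_⟩
  have hev : ∀ᶠ x : EN N in comap (fun x : EN N => ‖x‖) atTop,
      K x / V x ^ lam < ε := htend.eventually_lt_const hε
  rw [Filter.eventually_comap] at hev
  obtain ⟨a, ha⟩ := Filter.eventually_atTop.1 hev
  refine ⟨max a 1, lt_of_lt_of_le one_pos (le_max_right a 1), fun u hu => ?_⟩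
  have hmeas : MeasurableSet {x : EN N | max a 1 ≤ ‖x‖} :=
    (isClosed_le continuous_const continuous_norm).measurableSet
  have hpt : ∀ x ∈ {x : EN N | max a 1 ≤ ‖x‖},
      ENNReal.ofReal (K x * |u x| ^ m) ≤
        ENNReal.ofReal ε * ENNReal.ofReal (V x * u x ^ 2 + |u x| ^ c) := by
    intro x hx
    have hxR : max a 1 ≤ ‖x‖ := hx
    have hxε : K x / V x ^ lam < ε :=
      ha ‖x‖ (le_trans (le_max_left a 1) hxR) x rfl
    have hVx : 0 < V x := h1.1 x
    have hVl : 0 < V x ^ lam := Real.rpow_pos_of_pos hVx lam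
    set A := V x * u x ^ 2 with hA
    set B := |u x| ^ c with hB
    have hA0 : 0 ≤ A := by positivity
    have hB0 : 0 ≤ B := Real.rpow_nonneg (abs_nonneg _) c
    have hmrw : m = 2 * lam + c * (1 - lam) := by
      have h2 : c - 2 ≠ 0 := by linarith
      rw [hlam]; field_simp; ring
    have h2r : |u x| ^ (2:ℝ) = u x ^ 2 := by
      rw [show (2:ℝ) = ((2:ℕ):ℝ) by norm_num, Real.rpow_natCast, sq_abs]
    have hsplit : |u x| ^ m = (u x ^ 2) ^ lam * B ^ (1 - lam) := by
      rw [hmrw, Real.rpow_add' (abs_nonneg _) (by rw [← hmrw]; linarith),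
        Real.rpow_mul (abs_nonneg _), Real.rpow_mul (abs_nonneg _), h2r, hB]
    have hKrw : K x * |u x| ^ m = (K x / V x ^ lam) * (A ^ lam * B ^ (1 - lam)) := by
      rw [hsplit, hA, Real.mul_rpow hVx.le (sq_nonneg _)]
      field_simp
    have hgm : A ^ lam * B ^ (1 - lam) ≤ lam * A + (1 - lam) * B :=
      Real.geom_mean_le_arith_mean2_weighted hlam0.le (by linarith) hA0 hB0 (by ring)
    have hfin : K x * |u x| ^ m ≤ ε * (A + B) := by
      rw [hKrw]
      have h1' : (K x / V x ^ lam) * (A ^ lam * B ^ (1 - lam)) ≤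
          ε * (A ^ lam * B ^ (1 - lam)) :=
        mul_le_mul_of_nonneg_right hxε.le (by positivity)
      refine h1'.trans ?_
      have : A ^ lam * B ^ (1 - lam) ≤ A + B := hgm.trans (by nlinarith)
      exact mul_le_mul_of_nonneg_left this hε.le
    calc ENNReal.ofReal (K x * |u x| ^ m) ≤ ENNReal.ofReal (ε * (A + B)) :=
          ENNReal.ofReal_le_ofReal hfin
      _ = ENNReal.ofReal ε * ENNReal.ofReal (A + B) := ENNReal.ofReal_mul hε.le
  calc (∫⁻ x in {x : EN N | max a 1 ≤ ‖x‖}, ENNReal.ofReal (K x * |u x| ^ m)) ≤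
      ∫⁻ x in {x : EN N | max a 1 ≤ ‖x‖},
        ENNReal.ofReal ε * ENNReal.ofReal (V x * u x ^ 2 + |u x| ^ c) :=
      setLIntegral_mono' hmeas hpt
    _ = ENNReal.ofReal ε * ∫⁻ x in {x : EN N | max a 1 ≤ ‖x‖},
        ENNReal.ofReal (V x * u x ^ 2 + |u x| ^ c) :=
      lintegral_const_mul' _ _ ENNReal.ofReal_ne_top
end
end
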